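/- arXiv:1106.1292 — 2 statements merged into one kernel-verified Lean document; each statement's English description precedes it below -/
import Mathlib

section
/- Let X be a unital Banach algebra containing a sequence of idempotents π_i, i ∈ ℕ, with ‖π_i‖ = 1, ‖1_X − 2π_i‖ = 1 for all i, and π_i π_j = π_j π_i = π_j whenever j > i. Define I = {x ∈ X : lim_{i→∞} ‖x π_i‖ = 0}. Then I is a closed left ideal of X, and there exists a linear projection P : X* → I^⊥ with ‖I − 2P‖ ≤ 1 (an isometric reflection projection onto the annihilator of I). -/
open NormedSpace Filter Topology

noncomputable def UU : Ultrafilter ℕ := Ultrafilter.of atTop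

lemma UU_le_atTop : (UU : Filter ℕ) ≤ atTop := Ultrafilter.of_le _

lemma tendsto_ulim {g : ℕ → ℝ} {C : ℝ} (hg : ∀ i, |g i| ≤ C) :
    Tendsto g (UU : Filter ℕ) (𝓝 (limUnder (UU : Filter ℕ) g)) := by
  obtain ⟨a, _, hU⟩ := (isCompact_Icc (a := -C) (b := C)).ultrafilter_le_nhds (UU.map g)
    (by
      rw [le_principal_iff]
      exact Filter.mem_map.2 (Filter.Eventually.of_forall fun i => abs_le.1 (hg i)))
  have h : Tendsto g (UU : Filter ℕ) (𝓝 a) := hU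
  rw [h.limUnder_eq]; exact h

theorem closed_left_ideal_and_reflection_projection
    {X : Type*} [NormedRing X] [NormOneClass X] [NormedAlgebra ℝ X] [CompleteSpace X]
    (π : ℕ → X)
    (hidem : ∀ i, π i * π i = π i)
    (hnorm : ∀ i, ‖π i‖ = 1)
    (hrefl : ∀ i, ‖(1 : X) - 2 * π i‖ = 1)
    (hcomm : ∀ i j, i < j → π i * π j = π j ∧ π j * π i = π j) :
    (IsClosed {x : X | Filter.Tendsto (fun i => ‖x * π i‖) Filter.atTop (nhds 0)}) ∧
    (∀ x y : X,
      Filter.Tendsto (fun i => ‖x * π i‖) Filter.atTop (nhds 0) →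
      Filter.Tendsto (fun i => ‖y * π i‖) Filter.atTop (nhds 0) →
      Filter.Tendsto (fun i => ‖(x + y) * π i‖) Filter.atTop (nhds 0)) ∧
    (∀ a x : X, Filter.Tendsto (fun i => ‖x * π i‖) Filter.atTop (nhds 0) →
      Filter.Tendsto (fun i => ‖(a * x) * π i‖) Filter.atTop (nhds 0)) ∧
    ∃ P : StrongDual ℝ X →L[ℝ] StrongDual ℝ X,
      (∀ f, P (P f) = P f) ∧
      (∀ f : StrongDual ℝ X, ∀ y : X,
        Filter.Tendsto (fun i => ‖y * π i‖) Filter.atTop (nhds 0) → P f y = 0) ∧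
      (∀ f : StrongDual ℝ X,
        (∀ y : X, Filter.Tendsto (fun i => ‖y * π i‖) Filter.atTop (nhds 0) → f y = 0) →
        P f = f) ∧
      ‖ContinuousLinearMap.id ℝ (StrongDual ℝ X) - 2 • P‖ ≤ 1 := by
  have hπle : ∀ (x : X) (i : ℕ), ‖x * π i‖ ≤ ‖x‖ := by
    intro x i
    calc ‖x * π i‖ ≤ ‖x‖ * ‖π i‖ := norm_mul_le _ _
    _ = ‖x‖ := by rw [hnorm]; ring
  refine ⟨?_, ?_, ?_, ?_⟩
  · -- closedness
    rw [← isSeqClosed_iff_isClosed]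
    intro u l hu hl
    simp only [Set.mem_setOf_eq] at hu ⊢
    rw [Metric.tendsto_atTop]
    intro ε hε
    have h2 : (0:ℝ) < ε / 2 := by linarith
    obtain ⟨n, hn⟩ := (Metric.tendsto_atTop.1 hl) (ε/2) h2
    have hln : ‖l - u n‖ < ε / 2 := by
      have := hn n le_rfl
      rw [dist_eq_norm] at this
      rw [norm_sub_rev]; exact this
    obtain ⟨N, hN⟩ := (Metric.tendsto_atTop.1 (hu n)) (ε/2) h2
    refine ⟨N, fun i hi => ?_⟩
    have h1 := hN i hi
    rw [Real.dist_eq, sub_zero, abs_of_nonneg (norm_nonneg _)] at h1 ⊢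
    calc ‖l * π i‖ = ‖(l - u n) * π i + u n * π i‖ := by rw [sub_mul, sub_add_cancel]
    _ ≤ ‖(l - u n) * π i‖ + ‖u n * π i‖ := norm_add_le _ _
    _ ≤ ‖l - u n‖ + ‖u n * π i‖ := by gcongr; exact hπle _ _
    _ < ε / 2 + ε / 2 := by gcongr
    _ = ε := by ring
  · -- additive
    intro x y hx hy
    refine squeeze_zero (fun i => norm_nonneg _) (fun i => ?_) (by simpa using hx.add hy)
    rw [add_mul]; exact norm_add_le _ _
  · -- left ideal
    intro a x hx
    refine squeeze_zero (fun i => norm_nonneg _) (fun i => ?_)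
      (by simpa using hx.const_mul ‖a‖)
    rw [mul_assoc]; exact norm_mul_le _ _
  · -- the projection
    set φ : StrongDual ℝ X → X → ℝ := fun f x => limUnder (UU : Filter ℕ) (fun i => f (x * π i))
      with hφdef
    have hbd : ∀ (f : StrongDual ℝ X) (x : X) (i : ℕ), |f (x * π i)| ≤ ‖f‖ * ‖x‖ := by
      intro f x i
      have := f.le_opNorm (x * π i)
      rw [Real.norm_eq_abs] at this
      calc |f (x * π i)| ≤ ‖f‖ * ‖x * π i‖ := this
      _ ≤ ‖f‖ * ‖x‖ := by gcongr; exact hπle _ _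
    have hφt : ∀ (f : StrongDual ℝ X) (x : X),
        Tendsto (fun i => f (x * π i)) (UU : Filter ℕ) (𝓝 (φ f x)) :=
      fun f x => tendsto_ulim (hbd f x)
    -- the bilinear map
    have hadd : ∀ (f : StrongDual ℝ X) (x y : X), φ f (x + y) = φ f x + φ f y := by
      intro f x y
      have : Tendsto (fun i => f ((x + y) * π i)) (UU : Filter ℕ) (𝓝 (φ f x + φ f y)) := by
        simpa [add_mul, map_add] using (hφt f x).add (hφt f y)
      exact this.limUnder_eq
    have hsmul : ∀ (c : ℝ) (f : StrongDual ℝ X) (x : X), φ f (c • x) = c * φ f x := by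
      intro c f x
      have : Tendsto (fun i => f ((c • x) * π i)) (UU : Filter ℕ) (𝓝 (c * φ f x)) := by
        simpa [smul_mul_assoc, map_smul, smul_eq_mul] using (hφt f x).const_mul c
      exact this.limUnder_eq
    have haddf : ∀ (f g : StrongDual ℝ X) (x : X), φ (f + g) x = φ f x + φ g x := by
      intro f g x
      have : Tendsto (fun i => (f + g) (x * π i)) (UU : Filter ℕ) (𝓝 (φ f x + φ g x)) := by
        simpa using (hφt f x).add (hφt g x)
      exact this.limUnder_eq
    have hsmulf : ∀ (c : ℝ) (f : StrongDual ℝ X) (x : X), φ (c • f) x = c * φ f x := by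
      intro c f x
      have : Tendsto (fun i => (c • f) (x * π i)) (UU : Filter ℕ) (𝓝 (c * φ f x)) := by
        simpa [smul_eq_mul] using (hφt f x).const_mul c
      exact this.limUnder_eq
    have hφbd : ∀ (f : StrongDual ℝ X) (x : X), |φ f x| ≤ ‖f‖ * ‖x‖ :=
      fun f x => le_of_tendsto (hφt f x).abs (Filter.Eventually.of_forall (hbd f x))
    set B : StrongDual ℝ X →ₗ[ℝ] X →ₗ[ℝ] ℝ :=
      LinearMap.mk₂ ℝ φ
        (fun f g x => haddf f g x)
        (fun c f x => hsmulf c f x)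
        (fun f x y => hadd f x y)
        (fun c f x => hsmul c f x) with hBdef
    set P : StrongDual ℝ X →L[ℝ] StrongDual ℝ X :=
      LinearMap.mkContinuous₂ B 1 (fun f x => by
        simpa [hBdef, Real.norm_eq_abs] using (hφbd f x).trans (by nlinarith [hφbd f x])) with hPdef
    have hPapp : ∀ (f : StrongDual ℝ X) (x : X), P f x = φ f x := fun f x => rfl
    -- annihilation
    have hann : ∀ (f : StrongDual ℝ X) (y : X),
        Tendsto (fun i => ‖y * π i‖) atTop (𝓝 0) → P f y = 0 := by
      intro f y hy
      have h0 : Tendsto (fun i => f (y * π i)) (UU : Filter ℕ) (𝓝 0) := by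
        refine Tendsto.mono_left ?_ UU_le_atTop
        refine squeeze_zero_norm (fun i => ?_) (by simpa using hy.const_mul ‖f‖)
        have := f.le_opNorm (y * π i)
        calc ‖f (y * π i)‖ ≤ ‖f‖ * ‖y * π i‖ := this
        _ = ‖f‖ * ‖y * π i‖ := rfl
      rw [hPapp]
      exact h0.limUnder_eq
    -- membership of x * π i - x in I
    have hmem : ∀ (x : X) (i : ℕ),
        Tendsto (fun j => ‖(x * π i - x) * π j‖) atTop (𝓝 0) := by
      intro x i
      have : ∀ᶠ j in atTop, ‖(x * π i - x) * π j‖ = 0 := by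
        filter_upwards [eventually_gt_atTop i] with j hj
        have := (hcomm i j hj).1
        rw [sub_mul, mul_assoc, this, sub_self, norm_zero]
      exact tendsto_const_nhds.congr' (this.mono fun j h => h.symm)
    -- fixed points
    have hfix : ∀ (f : StrongDual ℝ X),
        (∀ y : X, Tendsto (fun i => ‖y * π i‖) atTop (𝓝 0) → f y = 0) → P f = f := by
      intro f hf
      ext x
      rw [hPapp]
      have hc : ∀ i, f (x * π i) = f x := by
        intro i
        have := hf (x * π i - x) (hmem x i)
        rw [map_sub] at this
        linarith
      have : Tendsto (fun i => f (x * π i)) (UU : Filter ℕ) (𝓝 (f x)) := by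
        simp only [hc]; exact tendsto_const_nhds
      exact this.limUnder_eq
    refine ⟨P, ?_, hann, hfix, ?_⟩
    · intro f
      exact hfix (P f) (fun y hy => hann f y hy)
    · -- norm bound
      refine ContinuousLinearMap.opNorm_le_bound _ one_pos.le (fun f => ?_)
      rw [one_mul]
      refine ContinuousLinearMap.opNorm_le_bound _ (norm_nonneg f) (fun x => ?_)
      have hval : ((ContinuousLinearMap.id ℝ (StrongDual ℝ X) - 2 • P) f) x = f x - 2 * φ f x := by
        simp [hPapp, two_smul, two_mul]
      rw [hval, Real.norm_eq_abs]
      have ht : Tendsto (fun i => f x - 2 * f (x * π i)) (UU : Filter ℕ)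
          (𝓝 (f x - 2 * φ f x)) := tendsto_const_nhds.sub ((hφt f x).const_mul 2)
      refine le_of_tendsto ht.abs (Filter.Eventually.of_forall fun i => ?_)
      have heq : f x - 2 * f (x * π i) = f (x * ((1 : X) - 2 * π i)) := by
        have : x * ((1 : X) - 2 * π i) = x - (x * π i + x * π i) := by
          rw [mul_sub, mul_one, two_mul, mul_add]
        rw [this, map_sub, map_add]; ring
      rw [heq]
      have := f.le_opNorm (x * ((1 : X) - 2 * π i))
      rw [Real.norm_eq_abs] at this
      calc |f (x * ((1:X) - 2 * π i))| ≤ ‖f‖ * ‖x * ((1:X) - 2 * π i)‖ := this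
      _ ≤ ‖f‖ * (‖x‖ * ‖(1:X) - 2 * π i‖) := by gcongr; exact norm_mul_le _ _
      _ = ‖f‖ * ‖x‖ := by rw [hrefl]; ring
end

section
/- Let H = L²[0,1] and let P be an orthogonal projection on H whose range contains the range of the multiplication operator by 1_{[0,1/2]}. Then for each n ∈ ℕ there exist surjective linear isometries (unitaries) R₁, …, R_n of H such that ‖I − (1/n) ∑_{i=1}^n R_i⁻¹ P R_i‖ ≤ 1/n. -/
open MeasureTheory

local notation "⟪" x ", " y "⟫" => @inner ℝ _ _ x y

theorem aux_opNorm_le {E : Type*} [NormedAddCommGroup E] [InnerProductSpace ℝ E]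
    (T : E →L[ℝ] E) {C : ℝ} (hC : 0 ≤ C)
    (hsymm : ∀ x y : E, ⟪T x, y⟫ = ⟪x, T y⟫)
    (h0 : ∀ x : E, 0 ≤ ⟪T x, x⟫)
    (h1 : ∀ x : E, ⟪T x, x⟫ ≤ C * ‖x‖ ^ 2) : ‖T‖ ≤ C := by
  have key : ∀ x y : E, ⟪T x, y⟫ ≤ C / 2 * (‖x‖ ^ 2 + ‖y‖ ^ 2) := by
    intro x y
    have e1 : ⟪T y, x⟫ = ⟪T x, y⟫ := by rw [hsymm y x, real_inner_comm]
    have h4 : 4 * ⟪T x, y⟫ = ⟪T (x + y), x + y⟫ - ⟪T (x - y), x - y⟫ := by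
      simp only [map_add, map_sub, inner_add_left, inner_add_right, inner_sub_left,
        inner_sub_right, e1]
      ring
    have hxy : ‖x + y‖ ^ 2 ≤ 2 * (‖x‖ ^ 2 + ‖y‖ ^ 2) := by
      have h5 := norm_add_sq_real x y
      have h2 := real_inner_le_norm x y
      nlinarith [norm_nonneg x, norm_nonneg y, sq_nonneg (‖x‖ - ‖y‖)]
    nlinarith [h0 (x - y), h1 (x + y), mul_le_mul_of_nonneg_left hxy hC]
  refine T.opNorm_le_bound hC fun x => ?_
  by_cases hTx : T x = 0
  · simp only [hTx, norm_zero]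
    positivity
  · have hTxpos : 0 < ‖T x‖ := norm_pos_iff.mpr hTx
    have hkey := key x ((‖x‖ / ‖T x‖) • T x)
    rw [real_inner_smul_right, real_inner_self_eq_norm_sq, norm_smul, Real.norm_eq_abs,
      abs_of_nonneg (by positivity)] at hkey
    have h6 : ‖x‖ / ‖T x‖ * ‖T x‖ = ‖x‖ := div_mul_cancel₀ _ (ne_of_gt hTxpos)
    have h7 : ‖x‖ / ‖T x‖ * ‖T x‖ ^ 2 = ‖x‖ * ‖T x‖ := by
      rw [pow_two, ← mul_assoc, h6]
    rw [h7] at hkey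
    have h8 : (‖x‖ / ‖T x‖ * ‖T x‖) ^ 2 = ‖x‖ ^ 2 := by rw [h6]
    rw [h8] at hkey
    rcases eq_or_lt_of_le (norm_nonneg x) with hx0 | hx0
    · have : x = 0 := norm_eq_zero.mp hx0.symm
      simp [this] at hTx
    · nlinarith

lemma aux_inner_indicator {α : Type*} [MeasurableSpace α] (μ : Measure α) {s t : Set α}
    (hs : MeasurableSet s) (ht : MeasurableSet t) (hμs : μ s ≠ ⊤) (hμt : μ t ≠ ⊤) (c d : ℝ) :
    ⟪indicatorConstLp 2 hs hμs c, indicatorConstLp 2 ht hμt d⟫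
      = c * d * (μ (s ∩ t)).toReal := by
  rw [L2.inner_indicatorConstLp_eq_setIntegral_inner]
  have hae : ∀ᵐ x ∂(μ.restrict s),
      (⟪c, (indicatorConstLp 2 ht hμt d : Lp ℝ 2 μ) x⟫ : ℝ)
        = t.indicator (fun _ => c * d) x := by
    filter_upwards [ae_restrict_of_ae (indicatorConstLp_coeFn (p := 2) (hs := ht)
      (hμs := hμt) (c := d))] with x hx
    rw [hx]
    by_cases hxt : x ∈ t
    · simp [hxt, Set.indicator_of_mem, RCLike.inner_apply, conj_trivial, mul_comm]
    · simp [hxt, Set.indicator_of_notMem, RCLike.inner_apply, conj_trivial]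
  rw [integral_congr_ae hae, setIntegral_indicator ht, setIntegral_const, smul_eq_mul]
  rw [measureReal_def]
  ring

lemma aux_family :
    ∃ v : ℕ ⊕ ℕ → Lp ℝ 2 (volume.restrict (Set.Icc (0:ℝ) 1)),
      Orthonormal ℝ v ∧
      ∀ k : ℕ, ∀ᵐ t ∂(volume.restrict (Set.Icc (0:ℝ) 1)),
        t ∉ Set.Icc (0:ℝ) (1/2) → (v (Sum.inl k) : ℝ → ℝ) t = 0 := by
  classical
  set μ0 : Measure ℝ := volume.restrict (Set.Icc (0:ℝ) 1) with hμ0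
  set l : ℕ ⊕ ℕ → ℝ :=
    Sum.elim (fun k => (2:ℝ)⁻¹ ^ (k + 2)) (fun k => 1 - (2:ℝ)⁻¹ ^ (k + 1)) with hl
  set r : ℕ ⊕ ℕ → ℝ :=
    Sum.elim (fun k => (2:ℝ)⁻¹ ^ (k + 1)) (fun k => 1 - (2:ℝ)⁻¹ ^ (k + 2)) with hr
  have hpowpos : ∀ k : ℕ, (0:ℝ) < 2⁻¹ ^ k := fun k => by positivity
  have hpowmono : ∀ a b : ℕ, a ≤ b → (2:ℝ)⁻¹ ^ b ≤ 2⁻¹ ^ a := fun a b hab =>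
    pow_le_pow_of_le_one (by norm_num) (by norm_num) hab
  have hpowhalf : ∀ k : ℕ, (2:ℝ)⁻¹ ^ (k + 1) ≤ 2⁻¹ := fun k => by
    simpa using hpowmono 1 (k + 1) (by omega)
  have hl0 : ∀ i, 0 ≤ l i := by
    rintro (k | k)
    · exact (hpowpos (k + 2)).le
    · simp only [hl, Sum.elim_inr]
      have := hpowhalf k
      norm_num at this ⊢
      linarith
  have hlr : ∀ i, l i < r i := by
    rintro (k | k) <;> simp only [hl, hr, Sum.elim_inl, Sum.elim_inr]
    · exact pow_lt_pow_right_of_lt_one₀ (by norm_num) (by norm_num) (by omega)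
    · have := pow_lt_pow_right_of_lt_one₀ (a := (2:ℝ)⁻¹) (by norm_num) (by norm_num)
        (show k + 1 < k + 2 by omega)
      linarith
  have hr1 : ∀ i, r i ≤ 1 := by
    rintro (k | k) <;> simp only [hl, hr, Sum.elim_inl, Sum.elim_inr]
    · have := hpowhalf k; linarith
    · have := hpowpos (k + 2); linarith
  set J : ℕ ⊕ ℕ → Set ℝ := fun i => Set.Ioc (l i) (r i) with hJ
  have hJsub : ∀ i, J i ⊆ Set.Icc (0:ℝ) 1 := by
    intro i x hx
    exact ⟨le_of_lt (lt_of_le_of_lt (hl0 i) hx.1), hx.2.trans (hr1 i)⟩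
  have hmeas : ∀ i, μ0 (J i) = ENNReal.ofReal (r i - l i) := by
    intro i
    rw [hμ0, Measure.restrict_apply measurableSet_Ioc,
      Set.inter_eq_self_of_subset_left (hJsub i), Real.volume_Ioc]
  have hne : ∀ i, μ0 (J i) ≠ ⊤ := fun i => by rw [hmeas i]; exact ENNReal.ofReal_ne_top
  have hpos : ∀ i, 0 < (μ0 (J i)).toReal := by
    intro i
    rw [hmeas i, ENNReal.toReal_ofReal (by linarith [hlr i])]
    linarith [hlr i]
  have hsep : ∀ i j, i ≠ j → r i ≤ l j ∨ r j ≤ l i := by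
    have base : ∀ k k' : ℕ, k < k' →
        r (Sum.inl k') ≤ l (Sum.inl k) ∧ r (Sum.inr k) ≤ l (Sum.inr k') := by
      intro k k' hkk'
      constructor
      · exact hpowmono (k + 2) (k' + 1) (by omega)
      · simp only [hl, hr, Sum.elim_inr]
        have := hpowmono (k + 2) (k' + 1) (by omega)
        linarith
    have lr : ∀ k k' : ℕ, r (Sum.inl k) ≤ l (Sum.inr k') := by
      intro k k'
      simp only [hl, hr, Sum.elim_inl, Sum.elim_inr]
      have h1 := hpowhalf k
      have h2 := hpowhalf k'
      linarith
    rintro (k | k) (k' | k') hij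
    · rcases Nat.lt_or_ge k k' with h | h
      · exact Or.inr (base k k' h).1
      · have hk : k' < k := lt_of_le_of_ne h fun hh => hij (by rw [hh])
        exact Or.inl (base k' k hk).1
    · exact Or.inl (lr k k')
    · exact Or.inr (lr k' k)
    · rcases Nat.lt_or_ge k k' with h | h
      · exact Or.inl (base k k' h).2
      · have hk : k' < k := lt_of_le_of_ne h fun hh => hij (by rw [hh])
        exact Or.inr (base k' k hk).2
  have hdisj : ∀ i j, i ≠ j → J i ∩ J j = ∅ := by
    intro i j hij
    apply Set.eq_empty_iff_forall_notMem.2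
    rintro x ⟨⟨h1, h2⟩, ⟨h3, h4⟩⟩
    rcases hsep i j hij with h | h
    · linarith
    · linarith
  set v : ℕ ⊕ ℕ → Lp ℝ 2 μ0 := fun i =>
    indicatorConstLp 2 measurableSet_Ioc (hne i) ((Real.sqrt ((μ0 (J i)).toReal))⁻¹) with hv
  refine ⟨v, ?_, ?_⟩
  · rw [orthonormal_iff_ite]
    intro i j
    rw [hv]
    rw [aux_inner_indicator]
    by_cases hij : i = j
    · subst hij
      have hm := hpos i
      rw [Set.inter_self, if_pos rfl, ← Real.mul_self_sqrt hm.le]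
      have hs : Real.sqrt ((μ0 (J i)).toReal) ≠ 0 := ne_of_gt (Real.sqrt_pos.2 hm)
      field_simp
      rw [Real.sqrt_sq (Real.sqrt_nonneg _)]
    · simp only [hij, if_false]
      rw [hdisj i j hij]
      simp
  · intro k
    filter_upwards [indicatorConstLp_coeFn (p := 2) (μ := μ0)
      (hs := measurableSet_Ioc (a := l (Sum.inl k)) (b := r (Sum.inl k)))
      (hμs := hne (Sum.inl k)) (c := (Real.sqrt ((μ0 (J (Sum.inl k))).toReal))⁻¹)]
      with t ht hti
    rw [hv] at *
    rw [ht]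
    apply Set.indicator_of_notMem
    intro htJ
    apply hti
    rcases htJ with ⟨h1, h2⟩
    constructor
    · have := hpowpos (k + 2)
      simp only [hl, Sum.elim_inl] at h1
      linarith
    · have := hpowhalf k
      simp only [hr, Sum.elim_inl] at h2
      norm_num at this ⊢
      linarith

set_option maxHeartbeats 1000000 in
theorem average_conjugated_projections_close_to_id
    (μ : Measure ℝ) (hμ : μ = volume.restrict (Set.Icc (0:ℝ) 1))
    (P : Lp ℝ 2 μ →L[ℝ] Lp ℝ 2 μ)
    (hidem : ∀ f, P (P f) = P f)
    (hsa : ∀ f g : Lp ℝ 2 μ, (inner ℝ (P f) g : ℝ) = inner ℝ f (P g))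
    (hrange : ∀ f : Lp ℝ 2 μ,
      (∀ᵐ t ∂μ, t ∉ Set.Icc (0:ℝ) (1/2) → f t = 0) → P f = f) :
    ∀ n : ℕ, 0 < n →
      ∃ R : Fin n → (Lp ℝ 2 μ ≃ₗᵢ[ℝ] Lp ℝ 2 μ),
        ‖ContinuousLinearMap.id ℝ (Lp ℝ 2 μ) -
          (n : ℝ)⁻¹ • ∑ i, (((R i).symm.toContinuousLinearEquiv :
              Lp ℝ 2 μ →L[ℝ] Lp ℝ 2 μ).comp
            (P.comp ((R i).toContinuousLinearEquiv : Lp ℝ 2 μ →L[ℝ] Lp ℝ 2 μ)))‖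
          ≤ 1 / n := by
  intro n hn
  classical
  subst hμ
  haveI : Fact ((2 : ENNReal) ≠ ⊤) := ⟨ENNReal.ofNat_ne_top⟩
  obtain ⟨v, hv, hvK⟩ := aux_family
  have hPv : ∀ k, P (v (Sum.inl k)) = v (Sum.inl k) := fun k => hrange _ (hvK k)
  obtain ⟨w, b, hsw, hb⟩ := hv.toSubtypeRange.exists_hilbertBasis_extension
  -- countability of the Hilbert basis index
  haveI hcw : Countable ↥w := by
    have hpair : Pairwise (Function.onFun Disjoint
        fun x : ↥w => Metric.ball (b x) (1/2)) := by
      intro x y hxy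
      apply Metric.ball_disjoint_ball
      rw [dist_eq_norm]
      have hx1 : ‖b x‖ = 1 := b.orthonormal.1 x
      have hy1 : ‖b y‖ = 1 := b.orthonormal.1 y
      have hxy0 : ⟪b x, b y⟫ = 0 := b.orthonormal.2 hxy
      have hns := norm_sub_sq_real (b x) (b y)
      rw [hx1, hy1, hxy0] at hns
      nlinarith [norm_nonneg (b x - b y)]
    exact hpair.countable_of_isOpen_disjoint (fun _ => Metric.isOpen_ball)
      (fun x => ⟨b x, Metric.mem_ball_self (by norm_num)⟩)
  have hvinj : Function.Injective v := hv.linearIndependent.injective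
  haveI hiw : Infinite ↥w :=
    Set.infinite_coe_iff.mpr ((Set.infinite_range_of_injective hvinj).mono hsw)
  obtain ⟨ρ⟩ : Nonempty (↥w ≃ ℕ) := inferInstance
  set g : ℕ ⊕ ℕ → ↥w := fun i => ⟨v i, hsw (Set.mem_range_self i)⟩ with hg
  have hbg : ∀ i, b (g i) = v i := by
    intro i
    show (⇑b) (g i) = v i
    rw [hb]
  have hginj : Function.Injective g := fun i j hij =>
    hvinj (congrArg Subtype.val hij)
  set B : Set ↥w := Set.range (g ∘ Sum.inl) with hB
  have hBinf : B.Infinite :=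
    Set.infinite_range_of_injective (hginj.comp Sum.inl_injective)
  have hBcinf : Bᶜ.Infinite := by
    apply Set.infinite_of_injective_forall_mem (f := fun k : ℕ => g (Sum.inr k))
      (hginj.comp Sum.inr_injective)
    intro k
    rintro ⟨k', hk'⟩
    exact Sum.inl_ne_inr (hginj hk')
  set q : ↥w → Fin n := fun x => ⟨ρ x % n, Nat.mod_lt _ hn⟩ with hq
  have hSinf : ∀ i : Fin n, (q ⁻¹' {i}).Infinite := by
    intro i
    apply Set.infinite_of_injective_forall_mem (f := fun j : ℕ => ρ.symm (n * j + (i : ℕ)))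
    · intro a c hac
      have h2 := ρ.symm.injective hac
      have h3 : n * a = n * c := by omega
      exact Nat.eq_of_mul_eq_mul_left hn h3
    · intro j
      simp only [Set.mem_preimage, Set.mem_singleton_iff, hq]
      apply Fin.ext
      simp only [Equiv.apply_symm_apply]
      rw [Nat.mul_add_mod]
      exact Nat.mod_eq_of_lt i.isLt
  have hτexists : ∀ i : Fin n, ∃ τ : ↥w ≃ ↥w, ∀ x : ↥w, q x ≠ i → τ x ∈ B := by
    intro i
    by_cases hn1 : n = 1
    · refine ⟨Equiv.refl _, fun x hx => absurd ?_ hx⟩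
      subst hn1
      exact Subsingleton.elim _ _
    · have h2n : 2 ≤ n := by omega
      set rr : ℕ := if (i : ℕ) = 0 then 1 else 0 with hrr
      have hrrlt : rr < n := by
        by_cases h : (i : ℕ) = 0 <;> simp only [hrr, h, if_true, if_false] <;> omega
      have hrrne : rr ≠ (i : ℕ) := by
        by_cases h : (i : ℕ) = 0 <;> simp only [hrr, h, if_true, if_false] <;> omega
      have hAinf : ((q ⁻¹' {i})ᶜ).Infinite := by
        apply Set.infinite_of_injective_forall_mem (f := fun j : ℕ => ρ.symm (n * j + rr))
        · intro a c hac
          have h2 := ρ.symm.injective hac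
          have h3 : n * a = n * c := by omega
          exact Nat.eq_of_mul_eq_mul_left hn h3
        · intro j
          simp only [Set.mem_compl_iff, Set.mem_preimage, Set.mem_singleton_iff, hq]
          intro hcon
          apply hrrne
          have := congrArg Fin.val hcon
          simp only [Equiv.apply_symm_apply] at this
          rw [Nat.mul_add_mod, Nat.mod_eq_of_lt hrrlt] at this
          exact this
      haveI : Infinite ↥((q ⁻¹' {i})ᶜ) := hAinf.to_subtype
      haveI : Infinite ↥((q ⁻¹' {i})ᶜᶜ) := by
        rw [compl_compl]
        exact (hSinf i).to_subtype
      haveI : Infinite ↥B := hBinf.to_subtype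
      haveI : Infinite ↥(Bᶜ) := hBcinf.to_subtype
      obtain ⟨eA⟩ : Nonempty (↥((q ⁻¹' {i})ᶜ) ≃ ℕ) := inferInstance
      obtain ⟨eAc⟩ : Nonempty (↥((q ⁻¹' {i})ᶜᶜ) ≃ ℕ) := inferInstance
      obtain ⟨eB⟩ : Nonempty (↥B ≃ ℕ) := inferInstance
      obtain ⟨eBc⟩ : Nonempty (↥(Bᶜ) ≃ ℕ) := inferInstance
      refine ⟨(Equiv.Set.sumCompl ((q ⁻¹' {i})ᶜ)).symm.trans
        ((Equiv.sumCongr (eA.trans eB.symm) (eAc.trans eBc.symm)).trans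
          (Equiv.Set.sumCompl B)), ?_⟩
      intro x hx
      have hxA : x ∈ (q ⁻¹' {i})ᶜ := by
        simp only [Set.mem_compl_iff, Set.mem_preimage, Set.mem_singleton_iff]
        exact hx
      simp only [Equiv.trans_apply]
      rw [Equiv.Set.sumCompl_symm_apply_of_mem hxA]
      simp only [Equiv.sumCongr_apply, Sum.map_inl, Equiv.Set.sumCompl_apply_inl]
      exact Subtype.coe_prop _
  choose τ hτ using hτexists
  have hsp : ∀ i : Fin n,
      ⊤ ≤ (Submodule.span ℝ (Set.range (⇑b ∘ ⇑(τ i)))).topologicalClosure := by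
    intro i
    rw [(τ i).surjective.range_comp, b.dense_span]
  set R : Fin n → (Lp ℝ 2 (volume.restrict (Set.Icc (0:ℝ) 1)) ≃ₗᵢ[ℝ]
      Lp ℝ 2 (volume.restrict (Set.Icc (0:ℝ) 1))) := fun i =>
    b.repr.trans ((HilbertBasis.mk (b.orthonormal.comp (τ i) (τ i).injective)
      (hsp i)).repr.symm) with hR
  have hRapp : ∀ (i : Fin n) (m : ↥w), R i (b m) = b (τ i m) := by
    intro i m
    simp only [hR, LinearIsometryEquiv.trans_apply]
    rw [b.repr_self, HilbertBasis.repr_symm_single, HilbertBasis.coe_mk]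
    rfl
  have hfixQ : ∀ (i : Fin n) (m : ↥w), q m ≠ i → P (R i (b m)) = R i (b m) := by
    intro i m hm
    rw [hRapp i m]
    obtain ⟨k, hk⟩ := hτ i m hm
    rw [← hk]
    show P (b (g (Sum.inl k))) = b (g (Sum.inl k))
    rw [hbg]
    exact hPv k
  -- inner product tools
  have hsymmR : ∀ (U : Lp ℝ 2 (volume.restrict (Set.Icc (0:ℝ) 1)) ≃ₗᵢ[ℝ]
      Lp ℝ 2 (volume.restrict (Set.Icc (0:ℝ) 1))) (y x), ⟪U.symm y, x⟫ = ⟪y, U x⟫ := by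
    intro U y x
    rw [← U.inner_map_map (U.symm y) x, U.apply_symm_apply]
  have hPy : ∀ y, ⟪y, P y⟫ = ‖P y‖ ^ 2 := by
    intro y
    have h1 := hsa y (P y)
    rw [hidem y] at h1
    rw [← h1, real_inner_self_eq_norm_sq]
  have hQinner : ∀ (i : Fin n) x, ⟪(R i).symm (P (R i x)), x⟫ = ‖P (R i x)‖ ^ 2 := by
    intro i x
    rw [hsymmR (R i) _ x, real_inner_comm]
    exact hPy (R i x)
  have hQle : ∀ (i : Fin n) x, ‖P (R i x)‖ ^ 2 ≤ ‖x‖ ^ 2 := by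
    intro i x
    have h1 := hPy (R i x)
    have h2 := real_inner_le_norm (R i x) (P (R i x))
    rw [(R i).norm_map] at h2
    nlinarith [norm_nonneg (P (R i x)), norm_nonneg x]
  -- the key lower estimate
  have hEst : ∀ x, (n - 1 : ℝ) * ‖x‖ ^ 2 ≤ ∑ i : Fin n, ‖P (R i x)‖ ^ 2 := by
    intro x
    set a : ↥w → ℝ := fun m => ⟪b m, x⟫ ^ 2 with ha
    have hsumm : Summable a := by
      refine (b.summable_inner_mul_inner x x).congr fun m => ?_
      simp only [ha]
      rw [real_inner_comm x (b m)]
      ring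
    have htsum : ∑' m, a m = ‖x‖ ^ 2 := by
      rw [← real_inner_self_eq_norm_sq, ← b.tsum_inner_mul_inner x x]
      refine tsum_congr fun m => ?_
      simp only [ha]
      rw [real_inner_comm x (b m)]
      ring
    have hfib : ∑ i : Fin n, ∑' (m : ↥(q ⁻¹' {i})), a ↑m = ‖x‖ ^ 2 := by
      have h1 : HasSum a (‖x‖ ^ 2) := htsum ▸ hsumm.hasSum
      have h2 := h1.tsum_fiberwise q
      rw [← tsum_fintype (L := SummationFilter.unconditional (Fin n))]
      exact h2.tsum_eq
    have hsplit : ∀ i : Fin n, ∑' (m : ↥((q ⁻¹' {i})ᶜ)), a ↑m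
        = ‖x‖ ^ 2 - ∑' (m : ↥(q ⁻¹' {i})), a ↑m := by
      intro i
      have h3 := Summable.tsum_subtype_add_tsum_subtype_compl hsumm (q ⁻¹' {i})
      rw [htsum] at h3
      linarith
    have hbess : ∀ i : Fin n, ∑' (m : ↥((q ⁻¹' {i})ᶜ)), a ↑m ≤ ‖P (R i x)‖ ^ 2 := by
      intro i
      have horth : Orthonormal ℝ (fun m : ↥((q ⁻¹' {i})ᶜ) => R i (b ↑m)) := by
        rw [orthonormal_iff_ite]
        intro m m'
        rw [LinearIsometryEquiv.inner_map_map]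
        by_cases h : m = m'
        · subst h
          rw [if_pos rfl, real_inner_self_eq_norm_sq, b.orthonormal.1]
          norm_num
        · rw [if_neg h]
          exact b.orthonormal.2 fun hc => h (Subtype.ext hc)
      have h5 := horth.tsum_inner_products_le (P (R i x))
      refine le_trans (le_of_eq (tsum_congr fun m => ?_)) h5
      have hmem : q ↑m ≠ i := m.2
      have h6 : ⟪R i (b ↑m), P (R i x)⟫ = ⟪b ↑m, x⟫ := by
        rw [← hsa, hfixQ i ↑m hmem, LinearIsometryEquiv.inner_map_map]
      rw [h6]
      simp only [ha]
      rw [Real.norm_eq_abs, sq_abs]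
    have h7 : ∑ i : Fin n, (‖x‖ ^ 2 - ∑' (m : ↥(q ⁻¹' {i})), a ↑m)
        ≤ ∑ i : Fin n, ‖P (R i x)‖ ^ 2 :=
      Finset.sum_le_sum fun i _ => by rw [← hsplit i]; exact hbess i
    rw [Finset.sum_sub_distrib, hfib, Finset.sum_const, Finset.card_univ,
      Fintype.card_fin, nsmul_eq_mul] at h7
    push_cast at h7 ⊢
    linarith
  -- assemble
  refine ⟨R, ?_⟩
  have hn0 : (0 : ℝ) < n := by exact_mod_cast hn
  have hTapp : ∀ y, (ContinuousLinearMap.id ℝ (Lp ℝ 2 (volume.restrict (Set.Icc (0:ℝ) 1))) -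
      (n : ℝ)⁻¹ • ∑ i, (((R i).symm.toContinuousLinearEquiv :
          Lp ℝ 2 (volume.restrict (Set.Icc (0:ℝ) 1)) →L[ℝ]
            Lp ℝ 2 (volume.restrict (Set.Icc (0:ℝ) 1))).comp
        (P.comp ((R i).toContinuousLinearEquiv :
          Lp ℝ 2 (volume.restrict (Set.Icc (0:ℝ) 1)) →L[ℝ]
            Lp ℝ 2 (volume.restrict (Set.Icc (0:ℝ) 1)))))) y
      = y - (n : ℝ)⁻¹ • ∑ i : Fin n, (R i).symm (P (R i y)) := by
    intro y
    simp [ContinuousLinearMap.sub_apply, ContinuousLinearMap.smul_apply,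
      ContinuousLinearMap.sum_apply, ContinuousLinearMap.coe_comp', Function.comp,
      ContinuousLinearEquiv.coe_coe, LinearIsometryEquiv.coe_toContinuousLinearEquiv]
  have hinnerL : ∀ y z, ⟪y - (n : ℝ)⁻¹ • ∑ i : Fin n, (R i).symm (P (R i y)), z⟫
      = ⟪y, z⟫ - (n : ℝ)⁻¹ * ∑ i : Fin n, ⟪(R i).symm (P (R i y)), z⟫ := by
    intro y z
    rw [inner_sub_left, real_inner_smul_left, sum_inner]
  have hQsym : ∀ (i : Fin n) y z,
      ⟪(R i).symm (P (R i y)), z⟫ = ⟪y, (R i).symm (P (R i z))⟫ := by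
    intro i y z
    calc ⟪(R i).symm (P (R i y)), z⟫ = ⟪P (R i y), R i z⟫ := hsymmR _ _ _
      _ = ⟪R i y, P (R i z)⟫ := hsa _ _
      _ = ⟪P (R i z), R i y⟫ := real_inner_comm _ _
      _ = ⟪(R i).symm (P (R i z)), y⟫ := (hsymmR _ _ _).symm
      _ = ⟪y, (R i).symm (P (R i z))⟫ := real_inner_comm _ _
  refine aux_opNorm_le _ (by positivity) ?_ ?_ ?_
  · intro y z
    rw [hTapp y, hTapp z, hinnerL y z]
    rw [inner_sub_right, real_inner_smul_right, inner_sum]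
    congr 1
    · congr 1
      exact Finset.sum_congr rfl fun i _ => hQsym i y z
  · intro y
    rw [hTapp y, hinnerL y y]
    have h8 : ∑ i : Fin n, ⟪(R i).symm (P (R i y)), y⟫ = ∑ i : Fin n, ‖P (R i y)‖ ^ 2 :=
      Finset.sum_congr rfl fun i _ => hQinner i y
    rw [h8, real_inner_self_eq_norm_sq]
    have h9 : ∑ i : Fin n, ‖P (R i y)‖ ^ 2 ≤ n * ‖y‖ ^ 2 := by
      calc ∑ i : Fin n, ‖P (R i y)‖ ^ 2 ≤ ∑ _i : Fin n, ‖y‖ ^ 2 :=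
            Finset.sum_le_sum fun i _ => hQle i y
        _ = n * ‖y‖ ^ 2 := by
            rw [Finset.sum_const, Finset.card_univ, Fintype.card_fin, nsmul_eq_mul]
    have h10 : (n : ℝ)⁻¹ * ∑ i : Fin n, ‖P (R i y)‖ ^ 2 ≤ ‖y‖ ^ 2 := by
      have h11 := mul_le_mul_of_nonneg_left h9 (le_of_lt (inv_pos.mpr hn0))
      rw [← mul_assoc, inv_mul_cancel₀ (ne_of_gt hn0), one_mul] at h11
      exact h11
    linarith
  · intro y
    rw [hTapp y, hinnerL y y]
    have h8 : ∑ i : Fin n, ⟪(R i).symm (P (R i y)), y⟫ = ∑ i : Fin n, ‖P (R i y)‖ ^ 2 :=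
      Finset.sum_congr rfl fun i _ => hQinner i y
    rw [h8, real_inner_self_eq_norm_sq]
    have h12 := hEst y
    have h13 := mul_le_mul_of_nonneg_left h12 (le_of_lt (inv_pos.mpr hn0))
    have h14 : (n : ℝ)⁻¹ * ((n - 1) * ‖y‖ ^ 2) = ‖y‖ ^ 2 - 1 / n * ‖y‖ ^ 2 := by
      field_simp
    rw [h14] at h13
    linarith
end
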